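/- In the intersection type theory 𝒯₄ over constants {c₀, c₁, c₂, c₃} with the axiom c₀ ∼ (c₀ ∩ (c₁ ∩ (c₁→c₂) → c₂)) → c₃ (plus →-soundness rules), the unsolvable term Ω₂Ω₂, where Ω₂ = λx.xx, can be assigned the type c₃: one derives ⊢ Ω₂ : c₀ and ⊢ Ω₂ : c₁ ∩ (c₁→c₂) → c₂, hence ⊢ Ω₂Ω₂ : c₃; so 𝒯₄ is non-sensible. -/
import Mathlib


/-- Pure λ-terms with variables named by natural numbers. -/
inductive Tm : Type
  | var : ℕ → Tm
  | lam : ℕ → Tm → Tm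
  | app : Tm → Tm → Tm
deriving DecidableEq

namespace Tm

/-- Free variables of a term. -/
def fv : Tm → Finset ℕ
  | var x => {x}
  | lam x t => fv t \ {x}
  | app t u => fv t ∪ fv u

/-- A variable fresh for a given finite set of variables. -/
def fresh (s : Finset ℕ) : ℕ := (s.sup id) + 1

/-- Capture-avoiding simultaneous substitution. -/
def subst (σ : ℕ → Tm) : Tm → Tm
  | var x => σ x
  | app t u => app (subst σ t) (subst σ u)
  | lam x t =>
      let y := fresh ((fv t \ {x}).biUnion fun z => fv (σ z))
      lam y (subst (fun z => if z = x then var y else σ z) t)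

/-- `M[x := N]`. -/
def subst1 (x : ℕ) (N M : Tm) : Tm :=
  subst (fun z => if z = x then N else var z) M

/-- `λx₁…xₙ. t`. -/
def lams (xs : List ℕ) (t : Tm) : Tm := xs.foldr lam t

/-- `t M₁ ⋯ Mₘ`. -/
def apps (t : Tm) (ts : List Tm) : Tm := ts.foldl app t

/-- One-step β-reduction: contextual closure of the β-rule. -/
inductive Step : Tm → Tm → Prop
  | beta (x : ℕ) (M N : Tm) : Step (app (lam x M) N) (subst1 x N M)
  | appL {M M' : Tm} (N : Tm) : Step M M' → Step (app M N) (app M' N)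
  | appR (M : Tm) {N N' : Tm} : Step N N' → Step (app M N) (app M N')
  | abs (x : ℕ) {M M' : Tm} : Step M M' → Step (lam x M) (lam x M')

/-- β-reduction: reflexive-transitive closure of one-step β-reduction. -/
def Red : Tm → Tm → Prop := Relation.ReflTransGen Step

/-- β-convertibility: the equivalence relation generated by β-reduction. -/
def Conv : Tm → Tm → Prop := Relation.EqvGen Step

/-- `M` is solvable if `(λx⃗.M) N₁ ⋯ Nₙ` β-reduces to the identity,
where `x⃗` covers the free variables of `M`. -/
def Solvable (M : Tm) : Prop :=
  ∃ (xs : List ℕ) (Ns : List Tm) (y : ℕ),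
    M.fv ⊆ xs.toFinset ∧ Red (apps (lams xs M) Ns) (lam y (var y))

/-- One-step head reduction: contraction of the head redex. -/
inductive HeadStep : Tm → Tm → Prop
  | beta (x : ℕ) (M N : Tm) (Ms : List Tm) :
      HeadStep (apps (app (lam x M) N) Ms) (apps (subst1 x N M) Ms)
  | abs (x : ℕ) {M M' : Tm} : HeadStep M M' → HeadStep (lam x M) (lam x M')

end Tm

/-- Intersection types over a set `A` of constants, with top `𝖴`. -/
inductive Ty (A : Type) : Type
  | const : A → Ty A
  | top : Ty A
  | arrow : Ty A → Ty A → Ty A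
  | inter : Ty A → Ty A → Ty A
deriving DecidableEq

/-- An intersection type theory: a subtyping relation on `Ty A` closed under
(Refl), (IncL), (IncR), (𝖴top), (Glb), (Trans) and (→∼). -/
structure ITT (A : Type) where
  le : Ty A → Ty A → Prop
  le_refl : ∀ a, le a a
  le_incL : ∀ a b, le (Ty.inter b a) b
  le_incR : ∀ a b, le (Ty.inter b a) a
  le_top : ∀ a, le a Ty.top
  le_glb : ∀ {a b c}, le c a → le c b → le c (Ty.inter a b)
  le_trans : ∀ {a b c}, le a b → le b c → le a c
  arrow_cong : ∀ {a a' b b'}, le a a' → le a' a → le b b' → le b' b →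
      le (Ty.arrow a b) (Ty.arrow a' b')

variable {A : Type}

/-- The equivalence `∼` induced by the subtyping. -/
def ITT.eqv (T : ITT A) (a b : Ty A) : Prop := T.le a b ∧ T.le b a

/-- Bases: (partial) mappings from term variables to types. -/
def Ctx (A : Type) := ℕ → Option (Ty A)

def Ctx.empty : Ctx A := fun _ => none

/-- `Γ, x:a`. -/
def Ctx.update (Γ : Ctx A) (x : ℕ) (a : Ty A) : Ctx A :=
  fun y => if y = x then some a else Γ y

/-- The intersection type assignment system induced by an itt `T`:
rules (Ax), (𝖴), (→I), (→E), (∩I) and (≤). -/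
inductive Der (T : ITT A) : Ctx A → Tm → Ty A → Prop
  | ax {Γ : Ctx A} {x a} : Γ x = some a → Der T Γ (Tm.var x) a
  | top {Γ M} : Der T Γ M Ty.top
  | arrI {Γ : Ctx A} {x M a b} :
      Der T (Γ.update x b) M a → Der T Γ (Tm.lam x M) (Ty.arrow b a)
  | arrE {Γ M N a b} :
      Der T Γ M (Ty.arrow b a) → Der T Γ N b → Der T Γ (Tm.app M N) a
  | interI {Γ M a b} : Der T Γ M a → Der T Γ M b → Der T Γ M (Ty.inter a b)
  | sub {Γ M a b} : Der T Γ M a → T.le a b → Der T Γ M b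

/-- Finite intersection `⋂_{i∈I} Aᵢ`, with `⋂_∅ = 𝖴`. -/
def interList : List (Ty A) → Ty A
  | [] => Ty.top
  | a :: l => Ty.inter a (interList l)

/-- The subtyping of the →-sound itt `𝒯₄` over constants `c₀, c₁, c₂, c₃`,
with the axiom `c₀ ∼ (c₀ ∩ (c₁ ∩ (c₁→c₂) → c₂)) → c₃`. -/
inductive T4le : Ty (Fin 4) → Ty (Fin 4) → Prop
  | refl (a) : T4le a a
  | incL (a b) : T4le (Ty.inter b a) b
  | incR (a b) : T4le (Ty.inter b a) a
  | top (a) : T4le a Ty.top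
  | glb {a b c} : T4le c a → T4le c b → T4le c (Ty.inter a b)
  | trans {a b c} : T4le a b → T4le b c → T4le a c
  | arrow {a a' b b'} : T4le b' b → T4le a a' →
      T4le (Ty.arrow b a) (Ty.arrow b' a')
  | arrowTop (a) : T4le Ty.top (Ty.arrow a Ty.top)
  | arrowInter (b a a') :
      T4le (Ty.inter (Ty.arrow b a) (Ty.arrow b a')) (Ty.arrow b (Ty.inter a a'))
  | topLe {b a} : T4le Ty.top (Ty.arrow b a) → T4le Ty.top a
  | axL : T4le (Ty.const 0)
      (Ty.arrow (Ty.inter (Ty.const 0)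
        (Ty.arrow (Ty.inter (Ty.const 1) (Ty.arrow (Ty.const 1) (Ty.const 2)))
          (Ty.const 2))) (Ty.const 3))
  | axR : T4le (Ty.arrow (Ty.inter (Ty.const 0)
      (Ty.arrow (Ty.inter (Ty.const 1) (Ty.arrow (Ty.const 1) (Ty.const 2)))
        (Ty.const 2))) (Ty.const 3)) (Ty.const 0)

/-- The itt `𝒯₄`. -/
def T4 : ITT (Fin 4) :=
  ⟨T4le, T4le.refl, T4le.incL, T4le.incR, T4le.top, T4le.glb, T4le.trans,
    fun h1 h2 h3 _ => T4le.arrow h2 h3⟩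

/-- `Ω₂ = λx.xx`. -/
def Omega2 : Tm := Tm.lam 0 (Tm.app (Tm.var 0) (Tm.var 0))

/-! ### Auxiliary development -/

/-- `λx.xx` with bound variable `x`. -/
def Om (x : ℕ) : Tm := Tm.lam x (Tm.app (Tm.var x) (Tm.var x))

/-- The leftmost spine ends in `Ω₂Ω₂` (up to renaming of the bound variable). -/
inductive Bad : Tm → Prop
  | oo (x : ℕ) : Bad (Tm.app (Om x) (Om x))
  | lam (y : ℕ) {t : Tm} : Bad t → Bad (Tm.lam y t)
  | app {t : Tm} (u : Tm) : Bad t → Bad (Tm.app t u)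

lemma subst_Om (σ : ℕ → Tm) (x : ℕ) : Tm.subst σ (Om x) = Om 1 := by
  simp [Om, Tm.subst, Tm.fv, Tm.fresh]

lemma bad_subst {M : Tm} (h : Bad M) : ∀ σ : ℕ → Tm, Bad (Tm.subst σ M) := by
  induction h with
  | oo x =>
      intro σ
      show Bad (Tm.app (Tm.subst σ (Om x)) (Tm.subst σ (Om x)))
      rw [subst_Om]; exact Bad.oo 1
  | lam y h ih =>
      intro σ
      show Bad (Tm.subst σ (Tm.lam y _))
      rw [Tm.subst]
      exact Bad.lam _ (ih _)
  | app u h ih =>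
      intro σ
      exact Bad.app _ (ih σ)

lemma no_step_var {x : ℕ} {u : Tm} : ¬ Tm.Step (Tm.var x) u := by
  intro h; cases h

lemma no_step_Om {x : ℕ} {u : Tm} : ¬ Tm.Step (Om x) u := by
  intro h
  cases h with
  | abs _ h =>
      cases h with
      | appL _ h => exact no_step_var h
      | appR _ h => exact no_step_var h

lemma bad_step {t u : Tm} (hs : Tm.Step t u) (hb : Bad t) : Bad u := by
  induction hs with
  | beta x M N =>
      cases hb with
      | oo x' =>
          simp only [Tm.subst1, Tm.subst, if_pos rfl]
          exact Bad.oo _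
      | app _ h =>
          cases h with
          | lam _ h => exact bad_subst h _
  | appL N hs ih =>
      cases hb with
      | oo x => exact absurd hs no_step_Om
      | app _ h => exact Bad.app _ (ih h)
  | appR M hs ih =>
      cases hb with
      | oo x => exact absurd hs no_step_Om
      | app _ h => exact Bad.app _ h
  | abs x hs ih =>
      cases hb with
      | lam _ h => exact Bad.lam _ (ih h)

lemma bad_red {t u : Tm} (hr : Tm.Red t u) (hb : Bad t) : Bad u := by
  induction hr with
  | refl => exact hb
  | tail _ hs ih => exact bad_step hs ih

lemma bad_lams {t : Tm} (h : Bad t) (xs : List ℕ) : Bad (Tm.lams xs t) := by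
  induction xs with
  | nil => exact h
  | cons x xs ih => exact Bad.lam _ ih

lemma bad_apps {t : Tm} (h : Bad t) (ts : List Tm) : Bad (Tm.apps t ts) := by
  induction ts generalizing t with
  | nil => exact h
  | cons u ts ih => exact ih (Bad.app _ h)

/-- Boolean valuation separating `𝖴` from `c₃`. -/
def val : Ty (Fin 4) → Bool
  | Ty.top => true
  | Ty.const _ => false
  | Ty.arrow _ a => val a
  | Ty.inter a b => val a && val b

lemma val_mono {a b : Ty (Fin 4)} (h : T4le a b) : val a = true → val b = true := by
  induction h <;> simp_all [val]

/-! Typing abbreviations -/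

private def Xt : Ty (Fin 4) :=
  Ty.inter (Ty.const 1) (Ty.arrow (Ty.const 1) (Ty.const 2))

private def C0X : Ty (Fin 4) :=
  Ty.inter (Ty.const 0) (Ty.arrow Xt (Ty.const 2))

lemma der_Om_arrow : Der T4 Ctx.empty Omega2 (Ty.arrow C0X (Ty.const 3)) := by
  apply Der.arrI
  have hx : (Ctx.empty.update 0 C0X) 0 = some C0X := by simp [Ctx.update]
  have hvar : Der T4 (Ctx.empty.update 0 C0X) (Tm.var 0) C0X := Der.ax hx
  have h0 : Der T4 (Ctx.empty.update 0 C0X) (Tm.var 0) (Ty.const 0) :=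
    Der.sub hvar (T4le.incL _ _)
  have harr : Der T4 (Ctx.empty.update 0 C0X) (Tm.var 0)
      (Ty.arrow C0X (Ty.const 3)) := Der.sub h0 T4le.axL
  exact Der.arrE harr hvar

lemma der_Om_c0 : Der T4 Ctx.empty Omega2 (Ty.const 0) :=
  Der.sub der_Om_arrow T4le.axR

lemma der_Om_X : Der T4 Ctx.empty Omega2 (Ty.arrow Xt (Ty.const 2)) := by
  apply Der.arrI
  have hx : (Ctx.empty.update 0 Xt) 0 = some Xt := by simp [Ctx.update]
  have hvar : Der T4 (Ctx.empty.update 0 Xt) (Tm.var 0) Xt := Der.ax hx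
  have h1 : Der T4 (Ctx.empty.update 0 Xt) (Tm.var 0) (Ty.const 1) :=
    Der.sub hvar (T4le.incL _ _)
  have harr : Der T4 (Ctx.empty.update 0 Xt) (Tm.var 0)
      (Ty.arrow (Ty.const 1) (Ty.const 2)) := Der.sub hvar (T4le.incR _ _)
  exact Der.arrE harr h1

/-- In `𝒯₄` one derives `⊢ Ω₂ : c₀` and
`⊢ Ω₂ : c₁ ∩ (c₁→c₂) → c₂`, hence `⊢ Ω₂Ω₂ : c₃`; `Ω₂Ω₂` is unsolvable and
`c₃ ≁ 𝖴`, so `𝒯₄` is non-sensible. -/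
theorem T4_non_sensible :
    Der T4 Ctx.empty Omega2 (Ty.const 0) ∧
    Der T4 Ctx.empty Omega2
      (Ty.arrow (Ty.inter (Ty.const 1) (Ty.arrow (Ty.const 1) (Ty.const 2)))
        (Ty.const 2)) ∧
    Der T4 Ctx.empty (Tm.app Omega2 Omega2) (Ty.const 3) ∧
    ¬ Tm.Solvable (Tm.app Omega2 Omega2) ∧
    ¬ T4.eqv (Ty.const 3) Ty.top := by
  refine ⟨der_Om_c0, der_Om_X, ?_, ?_, ?_⟩
  · exact Der.arrE der_Om_arrow (Der.interI der_Om_c0 der_Om_X)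
  · rintro ⟨xs, Ns, y, -, hred⟩
    have hbad : Bad (Tm.apps (Tm.lams xs (Tm.app Omega2 Omega2)) Ns) :=
      bad_apps (bad_lams (Bad.oo 0) xs) Ns
    have := bad_red hred hbad
    cases this with
    | lam _ h => cases h
  · rintro ⟨-, h⟩
    have : val (Ty.const 3) = true := val_mono h rfl
    simp [val] at this
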